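/- arXiv:1605.08795 — 4 statements merged into one kernel-verified Lean document; each statement's English description precedes it below -/
import Mathlib

section
/- Let A ∈ ℝ^{m×n_A} and let B ∈ ℝ^{m×n_B} have unit-norm columns. Let k ≤ n_B and let OPT_k be a set of k columns of B maximizing f_A among all k-element subsets of B's columns, and assume σ := σ_min(OPT_k) > 0. Then for every ε > 0, every greedy sequence (T_i) for (A, B), and every natural number r ≥ 16k/(ε·σ), we have f_A(T_r) ≥ (1 − ε)·f_A(OPT_k). -/
/-!
Write `F = f_A(OPT)`, `σ = σ_min(OPT)`, `k = |OPT|` and `Δ = F - f_A(T)`. For a column `u`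
of `A` the residual `u - Π_T u` still projects onto `span OPT` with norm at least
`‖Π_OPT u‖ - ‖Π_T u‖`, and Cauchy–Schwarz over the columns gives
`Δ² ≤ 4F · Σ_j f_{A_j - Π_T A_j}(OPT)`. Since `σ · f_w(OPT) ≤ Σ_{v ∈ OPT} ⟪v, w⟫²` and adding
a unit vector `v` to `T` raises `f_A` by at least `Σ_j ⟪v - Π_T v, A_j⟫² = Σ_j ⟪v, A_j - Π_T A_j⟫²`,
some column of `OPT`, hence the greedy choice, gains at least `σΔ²/(4kF)`. The recursion
`Δ_{i+1} ≤ Δ_i - Δ_i²/c` with `c = 4kF/σ` forces `i · Δ_i ≤ c`, and `c ≤ ε F r / 4` once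
`r ≥ 16k/(εσ)`.
-/

open scoped RealInnerProductSpace

attribute [local instance] Classical.decEq

noncomputable def fVec {m : ℕ} (u : EuclideanSpace ℝ (Fin m))
    (S : Finset (EuclideanSpace ℝ (Fin m))) : ℝ :=
  ‖(Submodule.orthogonalProjectionOnto (Submodule.span ℝ (S : Set (EuclideanSpace ℝ (Fin m)))) u :
      EuclideanSpace ℝ (Fin m))‖ ^ 2

noncomputable def fMat {m n : ℕ} (A : Fin n → EuclideanSpace ℝ (Fin m))
    (S : Finset (EuclideanSpace ℝ (Fin m))) : ℝ :=
  ∑ j, fVec (A j) S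

noncomputable def sigmaMin {m : ℕ} (S : Finset (EuclideanSpace ℝ (Fin m))) : ℝ :=
  sInf {r : ℝ | ∃ α : S → ℝ, ∑ v, (α v) ^ 2 = 1 ∧
    r = ‖∑ v, α v • (v : EuclideanSpace ℝ (Fin m))‖ ^ 2}

noncomputable def sigmaMax {m : ℕ} (S : Finset (EuclideanSpace ℝ (Fin m))) : ℝ :=
  sSup {r : ℝ | ∃ α : S → ℝ, ∑ v, (α v) ^ 2 = 1 ∧
    r = ‖∑ v, α v • (v : EuclideanSpace ℝ (Fin m))‖ ^ 2}

def IsGreedySeq {m nA nB : ℕ} (A : Fin nA → EuclideanSpace ℝ (Fin m))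
    (B : Fin nB → EuclideanSpace ℝ (Fin m))
    (T : ℕ → Finset (EuclideanSpace ℝ (Fin m))) (b : ℕ → Fin nB) : Prop :=
  T 0 = ∅ ∧ ∀ i, T (i + 1) = insert (B (b i)) (T i) ∧
    ∀ j, fMat A (insert (B j) (T i)) ≤ fMat A (insert (B (b i)) (T i))

namespace Submodule

variable {F : Type*} [NormedAddCommGroup F] [InnerProductSpace ℝ F]

theorem two_inner_sub_norm_sq_le_norm_starProjection_sq (K : Submodule ℝ F)
    [K.HasOrthogonalProjection] {y : F} (hy : y ∈ K) (u : F) :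
    2 * ⟪y, u⟫ - ‖y‖ ^ 2 ≤ ‖K.starProjection u‖ ^ 2 := by
  have hyu : ⟪y, u⟫ = ⟪y, K.starProjection u⟫ := by
    rw [← K.inner_starProjection_left_eq_right, K.starProjection_eq_self_iff.mpr hy]
  rw [hyu, real_inner_comm]
  nlinarith [norm_sub_sq_real (K.starProjection u) y, sq_nonneg ‖K.starProjection u - y‖]

theorem inner_sub_starProjection_right (K : Submodule ℝ F) [K.HasOrthogonalProjection]
    (v u : F) : ⟪v, u - K.starProjection u⟫ = ⟪v - K.starProjection v, u⟫ := by
  rw [inner_sub_right, inner_sub_left, K.inner_starProjection_left_eq_right]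

theorem norm_starProjection_le_of_le {K L : Submodule ℝ F} [K.HasOrthogonalProjection]
    [L.HasOrthogonalProjection] (h : K ≤ L) (u : F) :
    ‖K.starProjection u‖ ≤ ‖L.starProjection u‖ := by
  rw [K.starProjection_apply, ← orthogonalProjectionOnto_starProjection_of_le h]
  exact K.norm_starProjection_apply_le _

theorem norm_starProjection_sub_le_norm_starProjection_sub (K : Submodule ℝ F)
    [K.HasOrthogonalProjection] (u x : F) :
    ‖K.starProjection u‖ - ‖x‖ ≤ ‖K.starProjection (u - x)‖ := by
  rw [map_sub]
  linarith [norm_sub_norm_le (K.starProjection u) (K.starProjection x),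
    K.norm_starProjection_apply_le x]

theorem norm_starProjection_sq_add_inner_sq_le {K L : Submodule ℝ F}
    [K.HasOrthogonalProjection] [L.HasOrthogonalProjection] (h : K ≤ L) {v : F} (hvL : v ∈ L)
    (hv : ‖v‖ ≤ 1) (u : F) :
    ‖K.starProjection u‖ ^ 2 + ⟪v - K.starProjection v, u⟫ ^ 2 ≤ ‖L.starProjection u‖ ^ 2 := by
  set p := K.starProjection u
  set w := v - K.starProjection v
  set c := ⟪w, u⟫ with hc
  have hpK : p ∈ K := K.starProjection_apply_mem u
  have hpu : ⟪p, u⟫ = ‖p‖ ^ 2 := by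
    rw [← real_inner_self_eq_norm_sq, ← sub_eq_zero, ← inner_sub_right, real_inner_comm]
    exact K.starProjection_inner_eq_zero u p hpK
  have hwp : ⟪p, w⟫ = 0 := by
    rw [real_inner_comm]; exact K.starProjection_inner_eq_zero v p hpK
  have hw : ‖w‖ ≤ 1 := calc
    ‖w‖ = ‖Kᗮ.starProjection v‖ := by rw [K.starProjection_orthogonal_val]
    _ ≤ 1 := (Kᗮ.norm_starProjection_apply_le v).trans hv
  have hyL : p + c • w ∈ L :=
    L.add_mem (h hpK) (L.smul_mem c (L.sub_mem hvL (h (K.starProjection_apply_mem v))))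
  -- `‖Π_L u‖² ≥ 2⟪y, u⟫ - ‖y‖²` at `y = Π_K u + ⟪w, u⟫ • w`, where `w ⊥ K` and `‖w‖ ≤ 1`
  have hy := L.two_inner_sub_norm_sq_le_norm_starProjection_sq hyL u
  rw [inner_add_left, real_inner_smul_left, hpu, norm_add_sq_real, real_inner_smul_right, hwp,
    norm_smul, Real.norm_eq_abs, mul_pow, sq_abs, ← hc] at hy
  nlinarith [mul_le_mul_of_nonneg_left (pow_le_one₀ (n := 2) (norm_nonneg w) hw) (sq_nonneg c)]

end Submodule

section SigmaMin

variable {m : ℕ}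

local notation "E" => EuclideanSpace ℝ (Fin m)

theorem sigmaMin_nonneg (S : Finset E) : 0 ≤ sigmaMin S :=
  Real.sInf_nonneg fun _ ⟨_, _, hr⟩ => hr ▸ sq_nonneg _

theorem sigmaMin_le {S : Finset E} {α : S → ℝ} (hα : ∑ v, α v ^ 2 = 1) :
    sigmaMin S ≤ ‖∑ v, α v • (v : E)‖ ^ 2 :=
  csInf_le ⟨0, fun _ ⟨_, _, hr⟩ => hr ▸ sq_nonneg _⟩ ⟨α, hα, rfl⟩

theorem Finset.Nonempty.of_sigmaMin_pos {S : Finset E} (hσ : 0 < sigmaMin S) :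
    S.Nonempty := by
  rw [Finset.nonempty_iff_ne_empty]
  rintro rfl
  have hempty : {r : ℝ | ∃ α : (∅ : Finset E) → ℝ, ∑ v, α v ^ 2 = 1 ∧
      r = ‖∑ v, α v • (v : E)‖ ^ 2} = ∅ := by
    simp
  rw [sigmaMin, hempty, Real.sInf_empty] at hσ
  exact hσ.false

theorem sigmaMin_mul_sum_sq_le (S : Finset E) (β : S → ℝ) :
    sigmaMin S * ∑ v, β v ^ 2 ≤ ‖∑ v, β v • (v : E)‖ ^ 2 := by
  rcases (Finset.sum_nonneg fun v _ => sq_nonneg (β v)).eq_or_lt with hN | hN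
  · rw [← hN, mul_zero]; positivity
  have hs := Real.sq_sqrt hN.le
  have hσ := sigmaMin_le (α := fun v => (√(∑ v, β v ^ 2))⁻¹ * β v) (by
    simp only [mul_pow, ← Finset.mul_sum, inv_pow, hs, inv_mul_cancel₀ hN.ne'])
  simp only [mul_smul, ← Finset.smul_sum, norm_smul, mul_pow, norm_inv, Real.norm_eq_abs,
    sq_abs, inv_pow, hs] at hσ
  rwa [← div_eq_inv_mul, le_div_iff₀ hN] at hσ

theorem sigmaMin_mul_norm_sq_le_sum_inner_sq {S : Finset E} {p : E}
    (hp : p ∈ Submodule.span ℝ (S : Set E)) :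
    sigmaMin S * ‖p‖ ^ 2 ≤ ∑ v ∈ S, ⟪v, p⟫ ^ 2 := by
  obtain ⟨β, rfl⟩ := Submodule.mem_span_finset'.mp hp
  have hβ := sigmaMin_mul_sum_sq_le S β
  set p := ∑ v : S, β v • (v : E)
  have hnorm : ‖p‖ ^ 2 = ∑ v : S, β v * ⟪(v : E), p⟫ := by
    rw [← real_inner_self_eq_norm_sq, sum_inner]
    simp only [real_inner_smul_left]
  have hCS := Finset.sum_mul_sq_le_sq_mul_sq Finset.univ β (fun v : S => ⟪(v : E), p⟫)
  rw [← hnorm, Finset.sum_coe_sort S (fun v => ⟪v, p⟫ ^ 2)] at hCS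
  have hZ : 0 ≤ ∑ v ∈ S, ⟪v, p⟫ ^ 2 := Finset.sum_nonneg fun v _ => sq_nonneg _
  rcases (sq_nonneg ‖p‖).eq_or_lt with h0 | hpos
  · rw [← h0, mul_zero]; exact hZ
  refine le_of_mul_le_mul_right ?_ hpos
  calc sigmaMin S * ‖p‖ ^ 2 * ‖p‖ ^ 2 = sigmaMin S * (‖p‖ ^ 2) ^ 2 := by ring
    _ ≤ sigmaMin S * (∑ v, β v ^ 2) * ∑ v ∈ S, ⟪v, p⟫ ^ 2 := by
      rw [mul_assoc]; exact mul_le_mul_of_nonneg_left hCS (sigmaMin_nonneg S)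
    _ ≤ ‖p‖ ^ 2 * ∑ v ∈ S, ⟪v, p⟫ ^ 2 := mul_le_mul_of_nonneg_right hβ hZ
    _ = _ := mul_comm _ _

end SigmaMin

theorem add_one_mul_sub_sq_div_le {t x c : ℝ} (ht : 0 ≤ t) (hx : 0 ≤ x) (hc : 0 < c)
    (htx : t * x ≤ c) : (t + 1) * (x - x ^ 2 / c) ≤ c := by
  rw [show x - x ^ 2 / c = (c * x - x ^ 2) / c by field_simp, mul_div_assoc', div_le_iff₀ hc]
  -- `c² - (t + 1)(c x - x²) = (x - s)² + (t + 1) s x` with `s = c - t x ≥ 0`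
  nlinarith [sq_nonneg (x - (c - t * x)),
    mul_nonneg (mul_nonneg (by linarith : 0 ≤ t + 1) (sub_nonneg.2 htx)) hx]

theorem natCast_mul_le_of_le_sub_sq_div {d : ℕ → ℝ} {c : ℝ} (hc : 0 < c)
    (hanti : ∀ n, d (n + 1) ≤ d n) (hstep : ∀ n, 0 < d n → d (n + 1) ≤ d n - d n ^ 2 / c) :
    ∀ n : ℕ, n * d n ≤ c
  | 0 => by simpa using hc.le
  | n + 1 => by
    have ih := natCast_mul_le_of_le_sub_sq_div hc hanti hstep n
    push_cast
    rcases le_or_gt (d n) 0 with hd | hd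
    · nlinarith [hanti n, (n.cast_nonneg : (0 : ℝ) ≤ n)]
    · calc (n + 1) * d (n + 1) ≤ (n + 1) * (d n - d n ^ 2 / c) := by
            gcongr; exact hstep n hd
        _ ≤ c := add_one_mul_sub_sq_div_le n.cast_nonneg hd.le hc ih

theorem sq_sum_sub_sq_le_four_mul {ι : Type*} (s : Finset ι) {a b e : ι → ℝ}
    (ha : ∀ i ∈ s, 0 ≤ a i) (hb : ∀ i ∈ s, 0 ≤ b i) (habe : ∀ i ∈ s, a i - b i ≤ e i)
    (hsum : ∑ i ∈ s, b i ^ 2 ≤ ∑ i ∈ s, a i ^ 2) :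
    (∑ i ∈ s, (a i ^ 2 - b i ^ 2)) ^ 2 ≤ 4 * (∑ i ∈ s, a i ^ 2) * ∑ i ∈ s, e i ^ 2 := by
  have h0 : 0 ≤ ∑ i ∈ s, (a i ^ 2 - b i ^ 2) := by
    rw [Finset.sum_sub_distrib]; linarith
  have hlin : ∑ i ∈ s, (a i ^ 2 - b i ^ 2) ≤ ∑ i ∈ s, e i * (a i + b i) :=
    Finset.sum_le_sum fun i hi => by nlinarith [ha i hi, hb i hi, habe i hi]
  have hab : ∑ i ∈ s, (a i + b i) ^ 2 ≤ 4 * ∑ i ∈ s, a i ^ 2 := by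
    calc ∑ i ∈ s, (a i + b i) ^ 2 ≤ ∑ i ∈ s, (2 * a i ^ 2 + 2 * b i ^ 2) :=
          Finset.sum_le_sum fun i _ => by nlinarith [sq_nonneg (a i - b i)]
      _ ≤ 4 * ∑ i ∈ s, a i ^ 2 := by
          rw [Finset.sum_add_distrib, ← Finset.mul_sum, ← Finset.mul_sum]; linarith
  calc (∑ i ∈ s, (a i ^ 2 - b i ^ 2)) ^ 2 ≤ (∑ i ∈ s, e i * (a i + b i)) ^ 2 := by gcongr
    _ ≤ (∑ i ∈ s, e i ^ 2) * ∑ i ∈ s, (a i + b i) ^ 2 := Finset.sum_mul_sq_le_sq_mul_sq _ _ _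
    _ ≤ (∑ i ∈ s, e i ^ 2) * (4 * ∑ i ∈ s, a i ^ 2) := by gcongr
    _ = 4 * (∑ i ∈ s, a i ^ 2) * ∑ i ∈ s, e i ^ 2 := by ring

section ColumnSubsetObjective

variable {m : ℕ}

local notation "E" => EuclideanSpace ℝ (Fin m)

open Submodule

theorem fVec_eq_norm_starProjection_sq (u : E) (S : Finset E) :
    fVec u S = ‖(span ℝ (S : Set E)).starProjection u‖ ^ 2 := rfl

theorem fVec_mono (u : E) {S S' : Finset E} (h : S ⊆ S') : fVec u S ≤ fVec u S' :=
  pow_le_pow_left₀ (norm_nonneg _)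
    (norm_starProjection_le_of_le (span_mono (Finset.coe_subset.mpr h)) u) 2

theorem fVec_add_inner_sq_le_fVec_insert {v : E} (hv : ‖v‖ ≤ 1) (S : Finset E) (u : E) :
    fVec u S + ⟪v - (span ℝ (S : Set E)).starProjection v, u⟫ ^ 2 ≤ fVec u (insert v S) :=
  norm_starProjection_sq_add_inner_sq_le
    (span_mono (Finset.coe_subset.mpr (Finset.subset_insert v S)))
    (subset_span (Finset.mem_coe.mpr (Finset.mem_insert_self v S))) hv u

theorem sigmaMin_mul_fVec_le (S : Finset E) (u : E) :
    sigmaMin S * fVec u S ≤ ∑ v ∈ S, ⟪v, u⟫ ^ 2 := by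
  set K := span ℝ (S : Set E)
  have hinner : ∀ v ∈ S, ⟪v, u⟫ = ⟪v, K.starProjection u⟫ := fun v hv => by
    rw [← K.inner_starProjection_left_eq_right,
      K.starProjection_eq_self_iff.mpr (subset_span hv)]
  rw [Finset.sum_congr rfl fun v hv => by rw [hinner v hv]]
  exact sigmaMin_mul_norm_sq_le_sum_inner_sq (K.starProjection_apply_mem u)

variable {nA : ℕ} (A : Fin nA → EuclideanSpace ℝ (Fin m))

theorem fMat_nonneg (S : Finset E) : 0 ≤ fMat A S :=
  Finset.sum_nonneg fun _ _ => sq_nonneg _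

theorem fMat_mono {S S' : Finset E} (h : S ⊆ S') : fMat A S ≤ fMat A S' :=
  Finset.sum_le_sum fun j _ => fVec_mono (A j) h

theorem fMat_add_sum_inner_sq_le_fMat_insert {v : E} (hv : ‖v‖ ≤ 1) (S : Finset E) :
    fMat A S + ∑ j, ⟪v - (span ℝ (S : Set E)).starProjection v, A j⟫ ^ 2
      ≤ fMat A (insert v S) := by
  simp only [fMat, ← Finset.sum_add_distrib]
  exact Finset.sum_le_sum fun j _ => fVec_add_inner_sq_le_fVec_insert hv S (A j)

theorem sq_fMat_sub_le (O T : Finset E) (h : fMat A T ≤ fMat A O) :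
    (fMat A O - fMat A T) ^ 2 ≤
      4 * fMat A O * ∑ j, fVec (A j - (span ℝ (T : Set E)).starProjection (A j)) O := by
  set KO := span ℝ (O : Set E)
  set KT := span ℝ (T : Set E)
  have := sq_sum_sub_sq_le_four_mul Finset.univ (a := fun j => ‖KO.starProjection (A j)‖)
    (b := fun j => ‖KT.starProjection (A j)‖)
    (e := fun j => ‖KO.starProjection (A j - KT.starProjection (A j))‖)
    (fun _ _ => norm_nonneg _) (fun _ _ => norm_nonneg _)
    (fun j _ => KO.norm_starProjection_sub_le_norm_starProjection_sub _ _) h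
  simpa only [fMat, fVec_eq_norm_starProjection_sq, Finset.sum_sub_distrib] using this

theorem sigmaMin_mul_sum_fVec_le_sum_fMat_insert_sub {O : Finset E} (hO : ∀ v ∈ O, ‖v‖ ≤ 1)
    (T : Finset E) :
    sigmaMin O * ∑ j, fVec (A j - (span ℝ (T : Set E)).starProjection (A j)) O ≤
      ∑ v ∈ O, (fMat A (insert v T) - fMat A T) := by
  set K := span ℝ (T : Set E)
  calc sigmaMin O * ∑ j, fVec (A j - K.starProjection (A j)) O
      ≤ ∑ j, ∑ v ∈ O, ⟪v, A j - K.starProjection (A j)⟫ ^ 2 := by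
        rw [Finset.mul_sum]
        exact Finset.sum_le_sum fun j _ => sigmaMin_mul_fVec_le O _
    _ = ∑ v ∈ O, ∑ j, ⟪v - K.starProjection v, A j⟫ ^ 2 := by
        rw [Finset.sum_comm]
        simp only [K.inner_sub_starProjection_right]
    _ ≤ ∑ v ∈ O, (fMat A (insert v T) - fMat A T) :=
        Finset.sum_le_sum fun v hv => by
          linarith [fMat_add_sum_inner_sq_le_fMat_insert A (hO v hv) T]

theorem exists_mem_sq_sub_div_le_fMat_insert_sub {O T : Finset E} (hσ : 0 < sigmaMin O)
    (hO : ∀ v ∈ O, ‖v‖ ≤ 1) (hlt : fMat A T < fMat A O) :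
    ∃ v ∈ O, (fMat A O - fMat A T) ^ 2 / (4 * O.card * fMat A O / sigmaMin O) ≤
      fMat A (insert v T) - fMat A T := by
  obtain ⟨v, hv, hmax⟩ := O.exists_max_image (fun v => fMat A (insert v T) - fMat A T)
    (Finset.Nonempty.of_sigmaMin_pos hσ)
  refine ⟨v, hv, ?_⟩
  have hsum : ∑ w ∈ O, (fMat A (insert w T) - fMat A T) ≤
      O.card * (fMat A (insert v T) - fMat A T) := by
    simpa using Finset.sum_le_card_nsmul O _ _ hmax
  have hF : 0 < fMat A O := (fMat_nonneg A T).trans_lt hlt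
  have hk : (0 : ℝ) < O.card := by exact_mod_cast (Finset.Nonempty.of_sigmaMin_pos hσ).card_pos
  rw [div_le_iff₀ (by positivity), mul_div_assoc', le_div_iff₀ hσ]
  nlinarith [mul_le_mul_of_nonneg_left (sq_fMat_sub_le A O T hlt.le) hσ.le,
    mul_le_mul_of_nonneg_left
      ((sigmaMin_mul_sum_fVec_le_sum_fMat_insert_sub A hO T).trans hsum)
      (by positivity : 0 ≤ 4 * fMat A O)]

end ColumnSubsetObjective

namespace IsGreedySeq

variable {m nA nB : ℕ} {A : Fin nA → EuclideanSpace ℝ (Fin m)}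
  {B : Fin nB → EuclideanSpace ℝ (Fin m)} {T : ℕ → Finset (EuclideanSpace ℝ (Fin m))}
  {b : ℕ → Fin nB}

theorem fMat_insert_le (hT : IsGreedySeq A B T b) {v : EuclideanSpace ℝ (Fin m)}
    (hv : v ∈ Finset.image B Finset.univ) (i : ℕ) :
    fMat A (insert v (T i)) ≤ fMat A (T (i + 1)) := by
  obtain ⟨j, -, rfl⟩ := Finset.mem_image.mp hv
  rw [(hT.2 i).1]
  exact (hT.2 i).2 j

theorem fMat_le_succ (hT : IsGreedySeq A B T b) (i : ℕ) : fMat A (T i) ≤ fMat A (T (i + 1)) := by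
  rw [(hT.2 i).1]
  exact fMat_mono A (Finset.subset_insert _ _)

end IsGreedySeq

theorem greedy_css_optimal_general {m nA nB : ℕ}
    (A : Fin nA → EuclideanSpace ℝ (Fin m)) (B : Fin nB → EuclideanSpace ℝ (Fin m))
    (hB : ∀ j, ‖B j‖ = 1) (k : ℕ)
    (OPT : Finset (EuclideanSpace ℝ (Fin m)))
    (hOPTsub : OPT ⊆ Finset.image B Finset.univ) (hOPTcard : OPT.card = k)
    (hσ : 0 < sigmaMin OPT) :
    ∀ ε : ℝ, 0 < ε →
    ∀ (T : ℕ → Finset (EuclideanSpace ℝ (Fin m))) (b : ℕ → Fin nB),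
      IsGreedySeq A B T b →
    ∀ r : ℕ, (16 * k : ℝ) / (ε * sigmaMin OPT) ≤ r →
      (1 - ε) * fMat A OPT ≤ fMat A (T r) := by
  intro ε hε T b hT r hr
  rcases (fMat_nonneg A OPT).eq_or_lt with hF0 | hF
  · rw [← hF0, mul_zero]; exact fMat_nonneg A (T r)
  set F := fMat A OPT
  set σ := sigmaMin OPT
  have hO : ∀ v ∈ OPT, ‖v‖ ≤ 1 := fun v hv => by
    obtain ⟨j, -, rfl⟩ := Finset.mem_image.mp (hOPTsub hv)
    exact (hB j).le
  have hk : (0 : ℝ) < k := by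
    rw [← hOPTcard]; exact_mod_cast (Finset.Nonempty.of_sigmaMin_pos hσ).card_pos
  have hdecay := natCast_mul_le_of_le_sub_sq_div (d := fun n => F - fMat A (T n))
    (by positivity : 0 < 4 * k * F / σ) (fun n => by linarith [hT.fMat_le_succ n])
    (fun n hn => by
      obtain ⟨v, hv, hgain⟩ := exists_mem_sq_sub_div_le_fMat_insert_sub A hσ hO (by linarith)
      rw [hOPTcard] at hgain
      linarith [hT.fMat_insert_le (hOPTsub hv) n]) r
  have hr0 : (0 : ℝ) < r := lt_of_lt_of_le (by positivity) hr
  have hrε : 4 * k * F / σ ≤ r * (ε * F) := by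
    rw [div_le_iff₀ (by positivity)] at hr
    calc 4 * k * F / σ ≤ 16 * k * F / σ := by gcongr; norm_num
      _ ≤ r * (ε * σ) * F / σ := by gcongr
      _ = r * (ε * F) := by field_simp
  have := le_of_mul_le_mul_left (hdecay.trans hrε) hr0
  linarith

/-- Greedy column subset selection guarantee against the optimal k-subset of columns. -/
theorem greedy_css_optimal {m nA nB : ℕ}
    (A : Fin nA → EuclideanSpace ℝ (Fin m)) (B : Fin nB → EuclideanSpace ℝ (Fin m))
    (hB : ∀ j, ‖B j‖ = 1) (k : ℕ) (hk : k ≤ nB)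
    (OPT : Finset (EuclideanSpace ℝ (Fin m)))
    (hOPTsub : OPT ⊆ Finset.image B Finset.univ) (hOPTcard : OPT.card = k)
    (hOPTopt : ∀ C : Finset (EuclideanSpace ℝ (Fin m)),
      C ⊆ Finset.image B Finset.univ → C.card = k → fMat A C ≤ fMat A OPT)
    (hσ : 0 < sigmaMin OPT) :
    ∀ ε : ℝ, 0 < ε →
    ∀ (T : ℕ → Finset (EuclideanSpace ℝ (Fin m))) (b : ℕ → Fin nB),
      IsGreedySeq A B T b →
    ∀ r : ℕ, (16 * k : ℝ) / (ε * sigmaMin OPT) ≤ r →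
      (1 - ε) * fMat A OPT ≤ fMat A (T r) :=
  greedy_css_optimal_general A B hB k OPT hOPTsub hOPTcard hσ
end

section
/- Let u ∈ ℝ^m, let S and T be finite sets of vectors in ℝ^m with f_u(S) ≥ f_u(T) and f_u(S) > 0, and let x be a unit vector in span(S) with ⟨x, u⟩² = f_u(S). Then |⟨x − Π_T x, u⟩| ≥ (f_u(S) − f_u(T)) / (2·√(f_u(S))), where Π_T denotes orthogonal projection onto span(T). -/
open scoped RealInnerProductSpace

attribute [local instance] Classical.decEq

/-!
Orthogonal projection is self-adjoint, so `⟪Π_T x, u⟫ = ⟪x, Π_T u⟫`, which for a unit `x` is at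
most `‖Π_T u‖ = √f_u(T)`. Hence `|⟪x - Π_T x, u⟫| ≥ √f_u(S) - √f_u(T)`, and
`(f_u(S) - f_u(T)) / (2 √f_u(S)) ≤ √f_u(S) - √f_u(T)` because `a ^ 2 - b ^ 2 ≤ 2a(a - b)`.
-/

theorem Submodule.abs_inner_sub_norm_mul_norm_starProjection_le {E : Type*}
    [NormedAddCommGroup E] [InnerProductSpace ℝ E] (K : Submodule ℝ E)
    [K.HasOrthogonalProjection] (x u : E) :
    |⟪x, u⟫| - ‖x‖ * ‖K.starProjection u‖ ≤ |⟪x - K.starProjection x, u⟫| := by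
  have hPx : |⟪K.starProjection x, u⟫| ≤ ‖x‖ * ‖K.starProjection u‖ := by
    rw [K.inner_starProjection_left_eq_right]
    exact abs_real_inner_le_norm _ _
  rw [inner_sub_left]
  linarith [abs_sub_abs_le_abs_sub ⟪x, u⟫ ⟪K.starProjection x, u⟫]

/-- For `a > 0` this is `0 ≤ (a - b) ^ 2`; at `a = 0` the left side is a division by zero, hence `0`. -/
theorem sq_sub_sq_div_two_mul_le {a b c : ℝ} (ha : 0 ≤ a) (hc : 0 ≤ c) (h : a - b ≤ c) :
    (a ^ 2 - b ^ 2) / (2 * a) ≤ c := by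
  rcases ha.eq_or_lt with rfl | ha
  · simpa using hc
  rw [div_le_iff₀ (by positivity)]
  nlinarith [sq_nonneg (a - b)]

theorem inner_orth_part_lower_bound_general {m : ℕ}
    (u : EuclideanSpace ℝ (Fin m))
    (S T : Finset (EuclideanSpace ℝ (Fin m)))
    (x : EuclideanSpace ℝ (Fin m))
    (hxnorm : ‖x‖ = 1)
    (hxmax : ⟪x, u⟫ ^ 2 = fVec u S) :
    (fVec u S - fVec u T) / (2 * Real.sqrt (fVec u S)) ≤
      |⟪x - (Submodule.orthogonalProjectionOnto
          (Submodule.span ℝ (T : Set (EuclideanSpace ℝ (Fin m)))) x :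
          EuclideanSpace ℝ (Fin m)), u⟫| := by
  set K := Submodule.span ℝ (T : Set (EuclideanSpace ℝ (Fin m)))
  have hfS : Real.sqrt (fVec u S) = |⟪x, u⟫| := by rw [← hxmax, Real.sqrt_sq_eq_abs]
  have hfT : fVec u T = ‖K.starProjection u‖ ^ 2 := rfl
  have hlow := K.abs_inner_sub_norm_mul_norm_starProjection_le x u
  rw [hxnorm, one_mul] at hlow
  rw [hfS, hfT, ← hxmax, ← sq_abs]
  exact sq_sub_sq_div_two_mul_le (abs_nonneg _) (abs_nonneg _) hlow

/-- Lower bound on the inner product of the T-orthogonal part of the maximizer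
x of the projection of u onto span(S). -/
theorem inner_orth_part_lower_bound {m : ℕ}
    (u : EuclideanSpace ℝ (Fin m))
    (S T : Finset (EuclideanSpace ℝ (Fin m)))
    (hST : fVec u T ≤ fVec u S) (hS0 : 0 < fVec u S)
    (x : EuclideanSpace ℝ (Fin m))
    (hxS : x ∈ Submodule.span ℝ (S : Set (EuclideanSpace ℝ (Fin m))))
    (hxnorm : ‖x‖ = 1)
    (hxmax : ⟪x, u⟫ ^ 2 = fVec u S) :
    (fVec u S - fVec u T) / (2 * Real.sqrt (fVec u S)) ≤
      |⟪x - (Submodule.orthogonalProjectionOnto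
          (Submodule.span ℝ (T : Set (EuclideanSpace ℝ (Fin m)))) x :
          EuclideanSpace ℝ (Fin m)), u⟫| :=
  inner_orth_part_lower_bound_general u S T x hxnorm hxmax
end

section
/- Let u ∈ ℝ^m, let V be a finite set of vectors in ℝ^m with σ_min(V) > 0, and let (I, J) be any partition of V (I ∪ J = V, I ∩ J = ∅). Then f_u(I) + f_u(J) ≥ σ_min(V)·f_u(V) / (2·σ_max(V)). -/
open scoped RealInnerProductSpace

attribute [local instance] Classical.decEq

/-!
Write `w = Π_V u = ∑ c_v v` and split it as `x + y` along the cover, with `x ∈ span I` and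
`y ∈ span J`. Since `u - w ⊥ w`,
`‖w‖² = ⟪u, x⟫ + ⟪u, y⟫ ≤ √f_u(I) ‖x‖ + √f_u(J) ‖y‖`, and Cauchy–Schwarz gives
`‖w‖⁴ ≤ (f_u(I) + f_u(J)) (‖x‖² + ‖y‖²) ≤ (f_u(I) + f_u(J)) σ_max ‖c‖²`,
while `σ_min ‖c‖² ≤ ‖w‖²`. Hence `σ_min f_u(V) ≤ σ_max (f_u(I) + f_u(J))`,
even without the factor `2`.
-/

open Finset

section Projection

variable {E : Type*} [NormedAddCommGroup E] [InnerProductSpace ℝ E]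
  (K : Submodule ℝ E) [K.HasOrthogonalProjection] (u : E)

theorem inner_le_norm_orthogonalProjectionOnto_mul_norm {z : E} (hz : z ∈ K) :
    ⟪u, z⟫ ≤ ‖(K.orthogonalProjectionOnto u : E)‖ * ‖z‖ := by
  have h := K.inner_orthogonalProjectionOnto_eq_of_mem_right ⟨z, hz⟩ u
  rw [Submodule.coe_inner] at h
  exact h ▸ real_inner_le_norm _ _

theorem norm_orthogonalProjectionOnto_sq_eq_inner :
    ‖(K.orthogonalProjectionOnto u : E)‖ ^ 2 = ⟪u, (K.orthogonalProjectionOnto u : E)⟫ := by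
  rw [← real_inner_self_eq_norm_sq, ← Submodule.coe_inner,
    K.inner_orthogonalProjectionOnto_eq_of_mem_right]

end Projection

section Rayleigh

variable {m : ℕ}

def rayleighQuotients (V : Finset (EuclideanSpace ℝ (Fin m))) : Set ℝ :=
  {r : ℝ | ∃ α : V → ℝ, ∑ v, (α v) ^ 2 = 1 ∧
    r = ‖∑ v, α v • (v : EuclideanSpace ℝ (Fin m))‖ ^ 2}

theorem nonneg_of_mem_rayleighQuotients {V : Finset (EuclideanSpace ℝ (Fin m))} {r : ℝ}
    (hr : r ∈ rayleighQuotients V) : 0 ≤ r := by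
  obtain ⟨α, -, rfl⟩ := hr
  positivity

theorem bddAbove_rayleighQuotients (V : Finset (EuclideanSpace ℝ (Fin m))) :
    BddAbove (rayleighQuotients V) := by
  refine ⟨(∑ v ∈ V, ‖v‖) ^ 2, ?_⟩
  rintro r ⟨α, hα, rfl⟩
  have hα_le_one (v : V) : |α v| ≤ 1 := by
    rw [← sq_le_one_iff_abs_le_one, ← hα]
    exact single_le_sum (fun w _ ↦ sq_nonneg (α w)) (mem_univ v)
  have hnorm : ‖∑ v, α v • (v : EuclideanSpace ℝ (Fin m))‖ ≤ ∑ v ∈ V, ‖v‖ :=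
    calc ‖∑ v, α v • (v : EuclideanSpace ℝ (Fin m))‖
        ≤ ∑ v : V, |α v| * ‖(v : EuclideanSpace ℝ (Fin m))‖ := by
          simpa only [norm_smul, Real.norm_eq_abs] using
            norm_sum_le univ fun v : V ↦ α v • (v : EuclideanSpace ℝ (Fin m))
      _ ≤ ∑ v : V, ‖(v : EuclideanSpace ℝ (Fin m))‖ :=
          sum_le_sum fun v _ ↦ mul_le_of_le_one_left (norm_nonneg _) (hα_le_one v)
      _ = ∑ v ∈ V, ‖v‖ := sum_coe_sort V _
  gcongr

theorem sigmaMin_nonneg_s9 (V : Finset (EuclideanSpace ℝ (Fin m))) : 0 ≤ sigmaMin V :=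
  Real.sInf_nonneg fun _ ↦ nonneg_of_mem_rayleighQuotients

theorem sigmaMax_nonneg (V : Finset (EuclideanSpace ℝ (Fin m))) : 0 ≤ sigmaMax V :=
  Real.sSup_nonneg fun _ ↦ nonneg_of_mem_rayleighQuotients

theorem norm_sum_smul_sq_div_mem_rayleighQuotients (V : Finset (EuclideanSpace ℝ (Fin m)))
    (c : EuclideanSpace ℝ (Fin m) → ℝ) (hc : ∑ v ∈ V, c v ^ 2 ≠ 0) :
    ‖∑ v ∈ V, c v • v‖ ^ 2 / ∑ v ∈ V, c v ^ 2 ∈ rayleighQuotients V := by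
  set s := ∑ v ∈ V, c v ^ 2
  have hs : 0 ≤ s := sum_nonneg fun v _ ↦ sq_nonneg (c v)
  refine ⟨fun v ↦ c v / √s, ?_, ?_⟩
  · rw [sum_coe_sort V fun v ↦ (c v / √s) ^ 2]
    simp only [div_pow, Real.sq_sqrt hs, ← sum_div]
    exact div_self hc
  · rw [sum_coe_sort V fun v ↦ (c v / √s) • v]
    simp only [div_eq_inv_mul, ← smul_smul, ← smul_sum, norm_smul, mul_pow, norm_inv,
      Real.norm_eq_abs, abs_of_nonneg (Real.sqrt_nonneg s), inv_pow, Real.sq_sqrt hs]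

theorem sigmaMin_mul_sum_sq_le_s9 (V : Finset (EuclideanSpace ℝ (Fin m)))
    (c : EuclideanSpace ℝ (Fin m) → ℝ) :
    sigmaMin V * ∑ v ∈ V, c v ^ 2 ≤ ‖∑ v ∈ V, c v • v‖ ^ 2 := by
  rcases (sum_nonneg fun v _ ↦ sq_nonneg (c v) : 0 ≤ ∑ v ∈ V, c v ^ 2).eq_or_lt with hs | hs
  · rw [← hs, mul_zero]
    positivity
  rw [← le_div_iff₀ hs]
  exact csInf_le ⟨0, fun _ ↦ nonneg_of_mem_rayleighQuotients⟩
    (norm_sum_smul_sq_div_mem_rayleighQuotients V c hs.ne')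

theorem norm_sum_smul_sq_le_sigmaMax_mul (V : Finset (EuclideanSpace ℝ (Fin m)))
    (c : EuclideanSpace ℝ (Fin m) → ℝ) :
    ‖∑ v ∈ V, c v • v‖ ^ 2 ≤ sigmaMax V * ∑ v ∈ V, c v ^ 2 := by
  rcases (sum_nonneg fun v _ ↦ sq_nonneg (c v) : 0 ≤ ∑ v ∈ V, c v ^ 2).eq_or_lt with hs | hs
  · have hc : ∀ v ∈ V, c v = 0 := fun v hv ↦
      pow_eq_zero_iff two_ne_zero |>.mp <|
        (sum_eq_zero_iff_of_nonneg fun w _ ↦ sq_nonneg (c w)).mp hs.symm v hv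
    rw [sum_eq_zero fun v hv ↦ by rw [hc v hv, zero_smul], ← hs]
    simp
  rw [← div_le_iff₀ hs]
  exact le_csSup (bddAbove_rayleighQuotients V)
    (norm_sum_smul_sq_div_mem_rayleighQuotients V c hs.ne')

theorem norm_sum_smul_sq_le_sigmaMax_mul_of_subset {S V : Finset (EuclideanSpace ℝ (Fin m))}
    (hSV : S ⊆ V) (c : EuclideanSpace ℝ (Fin m) → ℝ) :
    ‖∑ v ∈ S, c v • v‖ ^ 2 ≤ sigmaMax V * ∑ v ∈ S, c v ^ 2 := by
  have h := norm_sum_smul_sq_le_sigmaMax_mul V fun v ↦ if v ∈ S then c v else 0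
  simp only [ite_smul, zero_smul, ite_pow, zero_pow two_ne_zero, sum_ite_mem,
    inter_eq_right.mpr hSV] at h
  exact h

end Rayleigh

theorem fVec_nonneg {m : ℕ} (u : EuclideanSpace ℝ (Fin m))
    (S : Finset (EuclideanSpace ℝ (Fin m))) : 0 ≤ fVec u S :=
  sq_nonneg _

theorem fVec_sq_le_mul_of_add_eq {m : ℕ} {u x y : EuclideanSpace ℝ (Fin m)}
    {V I J : Finset (EuclideanSpace ℝ (Fin m))}
    (hx : x ∈ Submodule.span ℝ (I : Set (EuclideanSpace ℝ (Fin m))))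
    (hy : y ∈ Submodule.span ℝ (J : Set (EuclideanSpace ℝ (Fin m))))
    (hxy : x + y =
      (Submodule.span ℝ (V : Set (EuclideanSpace ℝ (Fin m)))).orthogonalProjectionOnto u) :
    fVec u V ^ 2 ≤ (fVec u I + fVec u J) * (‖x‖ ^ 2 + ‖y‖ ^ 2) := by
  set P := fun S : Finset (EuclideanSpace ℝ (Fin m)) ↦
    ((Submodule.span ℝ (S : Set (EuclideanSpace ℝ (Fin m)))).orthogonalProjectionOnto u :
      EuclideanSpace ℝ (Fin m))
  have hV : fVec u V = ⟪u, x⟫ + ⟪u, y⟫ := by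
    rw [← inner_add_right, hxy]
    exact norm_orthogonalProjectionOnto_sq_eq_inner _ u
  have hux : ⟪u, x⟫ ≤ ‖P I‖ * ‖x‖ := inner_le_norm_orthogonalProjectionOnto_mul_norm _ u hx
  have huy : ⟪u, y⟫ ≤ ‖P J‖ * ‖y‖ := inner_le_norm_orthogonalProjectionOnto_mul_norm _ u hy
  calc fVec u V ^ 2 ≤ (‖P I‖ * ‖x‖ + ‖P J‖ * ‖y‖) ^ 2 := by
        gcongr
        · exact fVec_nonneg u V
        · linarith
    _ ≤ (‖P I‖ ^ 2 + ‖P J‖ ^ 2) * (‖x‖ ^ 2 + ‖y‖ ^ 2) := by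
        nlinarith [sq_nonneg (‖P I‖ * ‖y‖ - ‖P J‖ * ‖x‖)]

theorem sigmaMin_mul_fVec_le_sigmaMax_mul_add {m : ℕ} (u : EuclideanSpace ℝ (Fin m))
    {V I J : Finset (EuclideanSpace ℝ (Fin m))} (hV : V ⊆ I ∪ J) :
    sigmaMin V * fVec u V ≤ sigmaMax V * (fVec u I + fVec u J) := by
  obtain ⟨c, -, hc⟩ := Submodule.mem_span_finset.mp (Submodule.coe_mem
    ((Submodule.span ℝ (V : Set (EuclideanSpace ℝ (Fin m)))).orthogonalProjectionOnto u))
  have hxI : ∑ v ∈ V ∩ I, c v • v ∈ Submodule.span ℝ (I : Set (EuclideanSpace ℝ (Fin m))) :=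
    Submodule.sum_smul_mem _ c fun v hv ↦ Submodule.subset_span (mem_inter.mp hv).2
  have hyJ : ∑ v ∈ V \ I, c v • v ∈ Submodule.span ℝ (J : Set (EuclideanSpace ℝ (Fin m))) :=
    Submodule.sum_smul_mem _ c fun v hv ↦ Submodule.subset_span
      ((mem_union.mp (hV (mem_sdiff.mp hv).1)).resolve_left (mem_sdiff.mp hv).2)
  have hcs := fVec_sq_le_mul_of_add_eq hxI hyJ (by rw [sum_inter_add_sum_sdiff, hc])
  have hxσ := norm_sum_smul_sq_le_sigmaMax_mul_of_subset (inter_subset_left : V ∩ I ⊆ V) c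
  have hyσ := norm_sum_smul_sq_le_sigmaMax_mul_of_subset (sdiff_subset : V \ I ⊆ V) c
  have hσ : sigmaMin V * (∑ v ∈ V ∩ I, c v ^ 2 + ∑ v ∈ V \ I, c v ^ 2) ≤ fVec u V := by
    rw [sum_inter_add_sum_sdiff, fVec, ← hc]
    exact sigmaMin_mul_sum_sq_le_s9 V c
  have hF : 0 ≤ fVec u I + fVec u J := add_nonneg (fVec_nonneg u I) (fVec_nonneg u J)
  have hquartic :
      sigmaMin V * fVec u V * fVec u V ≤ sigmaMax V * (fVec u I + fVec u J) * fVec u V :=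
    calc sigmaMin V * fVec u V * fVec u V = sigmaMin V * fVec u V ^ 2 := by ring
      _ ≤ sigmaMin V * ((fVec u I + fVec u J) *
            (sigmaMax V * ∑ v ∈ V ∩ I, c v ^ 2 + sigmaMax V * ∑ v ∈ V \ I, c v ^ 2)) := by
          gcongr
          · exact sigmaMin_nonneg_s9 V
          · exact hcs.trans (by gcongr)
      _ = sigmaMax V * (fVec u I + fVec u J) *
            (sigmaMin V * (∑ v ∈ V ∩ I, c v ^ 2 + ∑ v ∈ V \ I, c v ^ 2)) := by ring
      _ ≤ sigmaMax V * (fVec u I + fVec u J) * fVec u V := by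
          gcongr
          exact mul_nonneg (sigmaMax_nonneg V) hF
  rcases (fVec_nonneg u V).eq_or_lt with h0 | hpos
  · rw [← h0, mul_zero]
    exact mul_nonneg (sigmaMax_nonneg V) hF
  · exact le_of_mul_le_mul_right hquartic hpos

theorem fVec_partition_additivity_general {m : ℕ}
    (u : EuclideanSpace ℝ (Fin m))
    (V I J : Finset (EuclideanSpace ℝ (Fin m)))
    (hunion : I ∪ J = V) :
    sigmaMin V * fVec u V / (2 * sigmaMax V) ≤ fVec u I + fVec u J := by
  have hf : 0 ≤ fVec u I + fVec u J := add_nonneg (fVec_nonneg u I) (fVec_nonneg u J)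
  have key := sigmaMin_mul_fVec_le_sigmaMax_mul_add u hunion.ge
  rcases (sigmaMax_nonneg V).eq_or_lt with hmax | hmax
  · rw [← hmax, mul_zero, div_zero]
    exact hf
  rw [div_le_iff₀ (by positivity)]
  linarith [mul_nonneg hmax.le hf]

/-- Near-additivity of f_u under partitioning, up to the condition number
(single-vector version). -/
theorem fVec_partition_additivity {m : ℕ}
    (u : EuclideanSpace ℝ (Fin m))
    (V I J : Finset (EuclideanSpace ℝ (Fin m)))
    (hσ : 0 < sigmaMin V)
    (hunion : I ∪ J = V) (hinter : I ∩ J = ∅) :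
    sigmaMin V * fVec u V / (2 * sigmaMax V) ≤ fVec u I + fVec u J :=
  fVec_partition_additivity_general u V I J hunion
end

section
/- Let U be a finite set with |U| = N, let M ⊆ U be nonempty, let k ≥ 1 be an integer with |M| ≤ k, let 0 < δ < 1, and let s be a natural number with N·log(1/δ)/k ≤ s ≤ N. If R is a subset of U of size s chosen uniformly at random (uniform over all size-s subsets), then P(R ∩ M ≠ ∅) ≥ (1 − δ)·|M|/k. -/
/-!
Missing `M` means choosing all `s` elements from `U \ M`, so the miss probability is
`C(N - m, s) / C(N, s) ≤ (1 - s/N)^m =: q^m`, where `m = |M|`. The bound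
`q ≤ exp (-s/N)` together with the assumption on `s` gives `q^k ≤ δ`, and concavity of
`t ↦ 1 - q^t` (which vanishes at `0`) gives `1 - q^m ≥ (m/k) (1 - q^k) ≥ (m/k) (1 - δ)`.
-/

open Finset

lemma Nat.cast_choose_le_cast_choose_succ_mul {a n : ℕ} (s : ℕ) (han : a + 1 ≤ n) :
    (a.choose s : ℝ) ≤ (a + 1).choose s * (1 - s / n) := by
  rcases le_or_gt s (a + 1) with hs | hs
  · have hrec : (a.choose s : ℝ) * (a + 1) = (a + 1).choose s * ((a + 1 : ℝ) - s) := by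
      exact_mod_cast Nat.choose_mul_succ_eq a s
    have hstep : (a.choose s : ℝ) = (a + 1).choose s * (1 - s / (a + 1 : ℝ)) := by
      field_simp
      exact hrec
    rw [hstep]
    gcongr
    exact_mod_cast han
  · simp [Nat.choose_eq_zero_of_lt hs, Nat.choose_eq_zero_of_lt (a.lt_succ_self.trans hs)]

lemma Nat.cast_choose_sub_le_cast_choose_mul_pow {n s : ℕ} (hs : s ≤ n) {m : ℕ}
    (hm : m ≤ n) :
    ((n - m).choose s : ℝ) ≤ n.choose s * (1 - s / n) ^ m := by
  induction m with
  | zero => simp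
  | succ m ih =>
    have hq : (0 : ℝ) ≤ 1 - s / n := by
      rw [sub_nonneg]
      exact div_le_one_of_le₀ (by exact_mod_cast hs) (Nat.cast_nonneg n)
    have hstep :=
      Nat.cast_choose_le_cast_choose_succ_mul (a := n - (m + 1)) (n := n) s (by omega)
    rw [show n - (m + 1) + 1 = n - m by omega] at hstep
    calc ((n - (m + 1)).choose s : ℝ) ≤ (n - m).choose s * (1 - s / n) := hstep
      _ ≤ n.choose s * (1 - s / n) ^ m * (1 - s / n) := by gcongr; exact ih (by omega)
      _ = n.choose s * (1 - s / n) ^ (m + 1) := by ring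

lemma mul_one_sub_pow_le_mul_one_sub_pow {q : ℝ} (hq0 : 0 ≤ q) (hq1 : q ≤ 1) {m k : ℕ}
    (hmk : m ≤ k) : m * (1 - q ^ k) ≤ k * (1 - q ^ m) := by
  obtain ⟨j, rfl⟩ := Nat.exists_eq_add_of_le hmk
  have hgeom : ∀ t : ℕ, 1 - q ^ t = (1 - q) * ∑ i ∈ range t, q ^ i := fun t => by
    rw [mul_comm, geom_sum_mul_neg]
  -- every term of `∑ i < m, q^i` is at least `q^m`, every term of the tail is at most `q^m`
  have hhead : m * q ^ m ≤ ∑ i ∈ range m, q ^ i := by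
    simpa using card_nsmul_le_sum (range m) (fun i => q ^ i) (q ^ m)
      fun i hi => pow_le_pow_of_le_one hq0 hq1 (mem_range.mp hi).le
  have htail : ∑ i ∈ range j, q ^ (m + i) ≤ j * q ^ m := by
    simpa [pow_add] using sum_le_card_nsmul (range j) (fun i => q ^ (m + i)) (q ^ m)
      fun i _ => by
        rw [pow_add]
        exact mul_le_of_le_one_right (pow_nonneg hq0 m) (pow_le_one₀ hq0 hq1)
  have hsum :
      (m : ℝ) * ∑ i ∈ range (m + j), q ^ i ≤ (m + j : ℕ) * ∑ i ∈ range m, q ^ i := by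
    rw [sum_range_add]
    push_cast
    nlinarith [mul_le_mul_of_nonneg_left htail (Nat.cast_nonneg (α := ℝ) m),
      mul_le_mul_of_nonneg_left hhead (Nat.cast_nonneg (α := ℝ) j)]
  rw [hgeom, hgeom, mul_left_comm, mul_left_comm (_ : ℝ) (1 - q)]
  exact mul_le_mul_of_nonneg_left hsum (sub_nonneg.mpr hq1)

lemma one_sub_pow_le_of_log_inv_le {x δ : ℝ} {k : ℕ} (hx : x ≤ 1) (hδ : 0 < δ)
    (h : Real.log (1 / δ) ≤ k * x) : (1 - x) ^ k ≤ δ :=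
  calc (1 - x) ^ k ≤ Real.exp (-x) ^ k :=
        pow_le_pow_left₀ (by linarith) (Real.one_sub_le_exp_neg x) k
    _ = Real.exp (-(k * x)) := by rw [← Real.exp_nat_mul]; ring_nf
    _ ≤ δ := by
        rw [← Real.le_log_iff_exp_le hδ]
        rw [one_div, Real.log_inv] at h
        linarith

lemma Finset.filter_disjoint_powersetCard {α : Type*} [DecidableEq α] (U M : Finset α)
    (s : ℕ) :
    (U.powersetCard s).filter (fun R => Disjoint R M) = (U \ M).powersetCard s := by
  ext R
  simp only [mem_filter, mem_powersetCard, subset_sdiff]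
  tauto

lemma Finset.one_sub_pow_le_card_filter_inter_nonempty_div {α : Type*} [DecidableEq α]
    {U M : Finset α} (hM : M ⊆ U) {s : ℕ} (hs : s ≤ #U) :
    1 - (1 - s / #U : ℝ) ^ #M ≤
      (#((U.powersetCard s).filter fun R => (R ∩ M).Nonempty) : ℝ) / #(U.powersetCard s) := by
  have hmiss : #((U.powersetCard s).filter fun R => ¬(R ∩ M).Nonempty) = (#U - #M).choose s := by
    simp_rw [not_nonempty_iff_eq_empty, ← disjoint_iff_inter_eq_empty,
      filter_disjoint_powersetCard, card_powersetCard, card_sdiff_of_subset hM]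
  have hsplit := card_filter_add_card_filter_not (s := U.powersetCard s)
    (p := fun R => (R ∩ M).Nonempty)
  rw [hmiss, card_powersetCard] at hsplit
  have hpos : (0 : ℝ) < (#U).choose s := by exact_mod_cast Nat.choose_pos hs
  have hbound := Nat.cast_choose_sub_le_cast_choose_mul_pow hs (card_le_card hM)
  rw [card_powersetCard, le_div_iff₀ hpos]
  have hsplit' : (#((U.powersetCard s).filter fun R => (R ∩ M).Nonempty) : ℝ)
      + (#U - #M).choose s = (#U).choose s := by exact_mod_cast hsplit
  linarith

theorem random_subset_hits_general {α : Type*} [DecidableEq α]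
    (U M : Finset α) (N k s : ℕ)
    (hN : U.card = N) (hM : M ⊆ U) (hMne : M.Nonempty)
    (hk : 1 ≤ k) (hMk : M.card ≤ k)
    (δ : ℝ) (hδ0 : 0 < δ)
    (hs1 : (N : ℝ) * Real.log (1 / δ) / k ≤ s) (hs2 : s ≤ N) :
    (1 - δ) * M.card / k ≤
      (((U.powersetCard s).filter fun R => (R ∩ M).Nonempty).card : ℝ) /
        ((U.powersetCard s).card : ℝ) := by
  subst hN
  have hk0 : (0 : ℝ) < k := by exact_mod_cast hk
  have hU0 : (0 : ℝ) < #U := by exact_mod_cast hMne.card_pos.trans_le (card_le_card hM)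
  have hsU : (s : ℝ) / #U ≤ 1 := div_le_one_of_le₀ (by exact_mod_cast hs2) hU0.le
  set q : ℝ := 1 - s / #U
  have hqk : q ^ k ≤ δ := by
    refine one_sub_pow_le_of_log_inv_le hsU hδ0 ?_
    rw [div_le_iff₀ hk0] at hs1
    rw [mul_div_assoc', le_div_iff₀ hU0]
    linarith
  have hconc := mul_one_sub_pow_le_mul_one_sub_pow (q := q) (by linarith)
    (sub_le_self _ (by positivity)) hMk
  calc (1 - δ) * #M / k ≤ 1 - q ^ #M := by
        rw [div_le_iff₀ hk0]
        nlinarith [Nat.cast_nonneg (α := ℝ) #M]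
    _ ≤ _ := one_sub_pow_le_card_filter_inter_nonempty_div hM hs2

/-- A uniformly random size-s subset R of U hits a nonempty subset M (with
|M| ≤ k and s ≥ N·log(1/δ)/k) with probability at least (1−δ)·|M|/k.
The probability is expressed by counting size-s subsets. -/
theorem random_subset_hits {α : Type*} [DecidableEq α]
    (U M : Finset α) (N k s : ℕ)
    (hN : U.card = N) (hM : M ⊆ U) (hMne : M.Nonempty)
    (hk : 1 ≤ k) (hMk : M.card ≤ k)
    (δ : ℝ) (hδ0 : 0 < δ) (hδ1 : δ < 1)
    (hs1 : (N : ℝ) * Real.log (1 / δ) / k ≤ s) (hs2 : s ≤ N) :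
    (1 - δ) * M.card / k ≤
      (((U.powersetCard s).filter fun R => (R ∩ M).Nonempty).card : ℝ) /
        ((U.powersetCard s).card : ℝ) :=
  random_subset_hits_general U M N k s hN hM hMne hk hMk δ hδ0 hs1 hs2
end
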